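/- arXiv:2108.04464 — 2 statements merged into one kernel-verified Lean document; each statement's English description precedes it below -/
import Mathlib

section
/- Let (Ω, 𝔽, ℙ) be an atomless probability space, let W be a real-valued random variable with cdf F_W, and let F_V be a cdf on ℝ such that at least one of F_W, F_V is continuous. Then inf { ℙ(W > V) : V a random variable on (Ω, 𝔽, ℙ) with cdf F_V } = sup_{z∈ℝ} (F_V(z) − F_W(z)). -/
open MeasureTheory Filter Topology

/-- A measure is atomless if every set of positive measure contains a measurable subset of
strictly smaller, yet positive, measure. -/
def Atomless {Ω : Type*} [MeasurableSpace Ω] (P : Measure Ω) : Prop :=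
  ∀ s : Set Ω, MeasurableSet s → 0 < P s →
    ∃ t : Set Ω, t ⊆ s ∧ MeasurableSet t ∧ 0 < P t ∧ P t < P s

/-!
Every coupling satisfies `ℙ(V < W) ≥ F_V z - F_W z`, because `{V ≤ z} ⊆ {V < W} ∪ {W ≤ z}`.
For the converse, let `S` be the supremum and `U` a distributional transform of `W`: a uniform
variable with `F_W(W-) ≤ U ≤ F_W(W)`, obtained by spreading each atom of `W` over the jump of `F_W`
with a conditionally uniform variable; these exist because the space is atomless (Sierpiński).
Put `V := F_V⁻¹((U + S) mod 1)`, so that `V ~ F_V`. If `V < W` but `U ≤ 1 - S`, pick a rational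
`q` with `V < q < W`: then `U + S ≤ F_V q ≤ F_W q + S` and `F_W q ≤ U`, so `U = F_W q`, which has
probability zero. Hence `ℙ(V < W) ≤ ℙ(U > 1 - S) = S`.
-/

open Set Function ProbabilityTheory
open scoped ENNReal

theorem exists_mem_forall_measure_le_add {Ω : Type*} [MeasurableSpace Ω] {μ : Measure Ω}
    [IsFiniteMeasure μ] {𝒮 : Set (Set Ω)} (hne : 𝒮.Nonempty) {ε : ℝ≥0∞} (hε : ε ≠ 0) :
    ∃ u ∈ 𝒮, ∀ v ∈ 𝒮, μ v ≤ μ u + ε := by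
  set a := sSup (μ '' 𝒮)
  have hle : ∀ v ∈ 𝒮, μ v ≤ a := fun v hv ↦ le_sSup (mem_image_of_mem μ hv)
  rcases le_or_gt a ε with ha | ha
  · obtain ⟨u, hu⟩ := hne
    exact ⟨u, hu, fun v hv ↦ (hle v hv).trans (ha.trans le_add_self)⟩
  have ha_top : a ≠ ∞ := ne_top_of_le_ne_top (measure_ne_top μ univ)
    (sSup_le (forall_mem_image.2 fun v _ ↦ measure_mono (subset_univ v)))
  obtain ⟨_, ⟨u, hu, rfl⟩, hlt⟩ := lt_sSup_iff.1 (ENNReal.sub_lt_self ha_top (pos_of_gt ha).ne' hε)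
  exact ⟨u, hu, fun v hv ↦ (hle v hv).trans (tsub_le_iff_right.1 hlt.le)⟩

namespace Atomless

variable {Ω : Type*} [MeasurableSpace Ω] {μ : Measure Ω} [IsFiniteMeasure μ] {s : Set Ω}

theorem exists_subset_measure_pos_le_half (hμ : Atomless μ) (hs : MeasurableSet s)
    (h : 0 < μ s) : ∃ t ⊆ s, MeasurableSet t ∧ 0 < μ t ∧ μ t ≤ μ s / 2 := by
  obtain ⟨t, hts, ht, ht0, hlt⟩ := hμ s hs h
  have hdiff : μ (s \ t) = μ s - μ t := measure_sdiff hts ht.nullMeasurableSet (measure_ne_top μ t)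
  rcases le_total (μ t) (μ s / 2) with hle | hle
  · exact ⟨t, hts, ht, ht0, hle⟩
  · refine ⟨s \ t, sdiff_subset, hs.diff ht, by rwa [hdiff, tsub_pos_iff_lt], ?_⟩
    calc μ (s \ t) = μ s - μ t := hdiff
      _ ≤ μ s - μ s / 2 := tsub_le_tsub_left hle _
      _ = μ s / 2 := ENNReal.sub_half (measure_ne_top μ s)

theorem exists_subset_measure_pos_le (hμ : Atomless μ) (hs : MeasurableSet s) (h : 0 < μ s)
    {ε : ℝ≥0∞} (hε : 0 < ε) : ∃ t ⊆ s, MeasurableSet t ∧ 0 < μ t ∧ μ t ≤ ε := by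
  have halve : ∀ n : ℕ, ∃ t ⊆ s, MeasurableSet t ∧ 0 < μ t ∧ μ t ≤ 2⁻¹ ^ n * μ s := by
    intro n
    induction n with
    | zero => exact ⟨s, Subset.rfl, hs, h, by simp⟩
    | succ n ih =>
      obtain ⟨t, hts, ht, ht0, hle⟩ := ih
      obtain ⟨u, hut, hu, hu0, hule⟩ := hμ.exists_subset_measure_pos_le_half ht ht0
      refine ⟨u, hut.trans hts, hu, hu0, ?_⟩
      calc μ u ≤ μ t / 2 := hule
        _ ≤ 2⁻¹ ^ n * μ s / 2 := by gcongr
        _ = 2⁻¹ ^ (n + 1) * μ s := by rw [div_eq_mul_inv, pow_succ]; ring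
  have hlim : Tendsto (fun n : ℕ => 2⁻¹ ^ n * μ s) atTop (𝓝 0) := by
    simpa using ENNReal.Tendsto.mul_const
      (ENNReal.tendsto_pow_atTop_nhds_zero_of_lt_one (by norm_num : (2 : ℝ≥0∞)⁻¹ < 1))
      (Or.inr (measure_ne_top μ s))
  obtain ⟨n, hn⟩ := (hlim.eventually (gt_mem_nhds hε)).exists
  obtain ⟨t, hts, ht, ht0, hle⟩ := halve n
  exact ⟨t, hts, ht, ht0, hle.trans hn.le⟩

-- Greedy exhaustion: each step nearly maximises the measure among admissible extensions; if the
-- union fell short of `r`, a small positive piece of the rest could be added at every step.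
theorem exists_subset_measure_eq (hμ : Atomless μ) (hs : MeasurableSet s) {r : ℝ≥0∞}
    (hr : r ≤ μ s) : ∃ t ⊆ s, MeasurableSet t ∧ μ t = r := by
  let good : Set (Set Ω) := {t | t ⊆ s ∧ MeasurableSet t ∧ μ t ≤ r}
  have extend : ∀ n : ℕ, ∀ t ∈ good, ∃ u ∈ good, t ⊆ u ∧
      ∀ v ∈ good, t ⊆ v → μ v ≤ μ u + (n : ℝ≥0∞)⁻¹ := by
    intro n t ht
    obtain ⟨u, ⟨hu, htu⟩, hmax⟩ := exists_mem_forall_measure_le_add (μ := μ)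
      (𝒮 := {v | v ∈ good ∧ t ⊆ v}) ⟨t, ht, Subset.rfl⟩
      (ENNReal.inv_ne_zero.2 (ENNReal.natCast_ne_top n))
    exact ⟨u, hu, htu, fun v hv htv ↦ hmax v ⟨hv, htv⟩⟩
  choose! step hstep_good hstep_sub hstep_max using extend
  let f : ℕ → Set Ω := fun n ↦ Nat.rec ∅ step n
  have hf_good : ∀ n, f n ∈ good := by
    intro n
    induction n with
    | zero => exact ⟨empty_subset s, .empty, (by simp : μ ∅ ≤ r)⟩
    | succ n ih => exact hstep_good n _ ih
  have hf_mono : Monotone f := monotone_nat_of_le_succ fun n ↦ hstep_sub n _ (hf_good n)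
  set T := ⋃ n, f n
  have hT : MeasurableSet T := .iUnion fun n ↦ (hf_good n).2.1
  have hTs : T ⊆ s := iUnion_subset fun n ↦ (hf_good n).1
  have hTr : μ T ≤ r := by
    rw [hf_mono.measure_iUnion]
    exact iSup_le fun n ↦ (hf_good n).2.2
  refine ⟨T, hTs, hT, le_antisymm hTr (not_lt.1 fun hlt ↦ ?_)⟩
  have hgap : 0 < μ (s \ T) := by
    rw [measure_sdiff hTs hT.nullMeasurableSet (measure_ne_top μ T)]
    exact tsub_pos_iff_lt.2 (hlt.trans_le hr)
  obtain ⟨u, hu, hum, hu0, hule⟩ :=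
    hμ.exists_subset_measure_pos_le (hs.diff hT) hgap (tsub_pos_iff_lt.2 hlt)
  obtain ⟨n, hn⟩ := ENNReal.exists_inv_nat_lt hu0.ne'
  have hdisj : Disjoint T u := disjoint_of_subset_right hu disjoint_sdiff_right
  have hTu : T ∪ u ∈ good := by
    refine ⟨union_subset hTs (hu.trans sdiff_subset), hT.union hum, ?_⟩
    rw [measure_union hdisj hum]
    exact (add_le_add le_rfl hule).trans (add_tsub_cancel_of_le hTr).le
  have key : μ T + μ u ≤ μ T + (n : ℝ≥0∞)⁻¹ := by
    rw [← measure_union hdisj hum]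
    exact (hstep_max n _ (hf_good n) _ hTu ((subset_iUnion f n).trans subset_union_left)).trans
      (add_le_add_left (measure_mono (subset_iUnion f (n + 1))) _)
  exact hn.not_ge ((ENNReal.add_le_add_iff_left (measure_ne_top μ T)).1 key)

theorem exists_between_measure_eq (hμ : Atomless μ) {t : Set Ω} (hst : s ⊆ t)
    (hs : MeasurableSet s) (ht : MeasurableSet t) {r : ℝ≥0∞} (hsr : μ s ≤ r) (hrt : r ≤ μ t) :
    ∃ u, s ⊆ u ∧ u ⊆ t ∧ MeasurableSet u ∧ μ u = r := by
  obtain ⟨v, hvt, hv, hμv⟩ := hμ.exists_subset_measure_eq (ht.diff hs) (r := r - μ s)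
    (by rw [measure_sdiff hst hs.nullMeasurableSet (measure_ne_top μ s)]; gcongr)
  refine ⟨s ∪ v, subset_union_left, union_subset hst (hvt.trans sdiff_subset), hs.union hv, ?_⟩
  rw [measure_union (disjoint_of_subset_right hvt disjoint_sdiff_right) hv, hμv,
    add_tsub_cancel_of_le hsr]

end Atomless

def IsDyadicLevel {Ω : Type*} [MeasurableSpace Ω] (μ : Measure Ω) (n : ℕ) (g : ℕ → Set Ω) :
    Prop :=
  (∀ k, MeasurableSet (g k)) ∧ Monotone g ∧ ∀ k, μ (g k) = ENNReal.ofReal (min (k / 2 ^ n) 1)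

namespace Atomless

variable {Ω : Type*} [MeasurableSpace Ω] {μ : Measure Ω} [IsProbabilityMeasure μ]

theorem exists_dyadic_refinement (hμ : Atomless μ) {n : ℕ} {g : ℕ → Set Ω}
    (hg : IsDyadicLevel μ n g) :
    ∃ g' : ℕ → Set Ω, IsDyadicLevel μ (n + 1) g' ∧ ∀ k, g' (2 * k) = g k := by
  obtain ⟨hgm, hmono, hμg⟩ := hg
  have hhalf : ∀ k : ℕ, ((2 * k : ℕ) : ℝ) / 2 ^ (n + 1) = k / 2 ^ n := by
    intro k; push_cast; rw [pow_succ]; field_simp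
  have hmid : ∀ k, ∃ m, g k ⊆ m ∧ m ⊆ g (k + 1) ∧ MeasurableSet m ∧
      μ m = ENNReal.ofReal (min (((2 * k + 1 : ℕ) : ℝ) / 2 ^ (n + 1)) 1) := by
    intro k
    refine hμ.exists_between_measure_eq (hmono k.le_succ) (hgm k) (hgm _) ?_ ?_
    · rw [hμg, ← hhalf]; gcongr; omega
    · rw [hμg, show ((k + 1 : ℕ) : ℝ) / 2 ^ n = ((2 * k + 2 : ℕ) : ℝ) / 2 ^ (n + 1) by
        rw [show 2 * k + 2 = 2 * (k + 1) by ring, hhalf]]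
      gcongr; omega
  choose m hgm_sub hm_sub hm hμm using hmid
  refine ⟨fun j ↦ if j % 2 = 0 then g (j / 2) else m (j / 2), ⟨fun j ↦ ?_, ?_, fun j ↦ ?_⟩,
    fun k ↦ by simp⟩
  · dsimp only
    split_ifs
    exacts [hgm _, hm _]
  · refine monotone_nat_of_le_succ fun j ↦ ?_
    obtain ⟨k, rfl | rfl⟩ := Nat.even_or_odd' j
    · simpa [Nat.add_mod, Nat.add_div] using hgm_sub k
    · simpa [Nat.add_mod, show (2 * k + 1 + 1) / 2 = k + 1 by omega,
        show (2 * k + 1) / 2 = k by omega] using hm_sub k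
  · obtain ⟨k, rfl | rfl⟩ := Nat.even_or_odd' j
    · simp only [Nat.mul_mod_right, ↓reduceIte, Nat.mul_div_cancel_left k two_pos]
      rw [hμg, hhalf]
    · simpa [Nat.add_mod, show (2 * k + 1) / 2 = k by omega] using hμm k

theorem exists_dyadic_chain (hμ : Atomless μ) :
    ∃ c : ℕ → ℕ → Set Ω, (∀ n, IsDyadicLevel μ n (c n)) ∧
      (∀ n k, c (n + 1) (2 * k) = c n k) ∧ (∀ n, c n 0 = ∅) ∧ c 0 1 = univ := by
  choose! next hnext hnext_refines using
    fun n (g : ℕ → Set Ω) ↦ hμ.exists_dyadic_refinement (n := n) (g := g)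
  let c : ℕ → ℕ → Set Ω := fun n ↦ Nat.rec (fun k ↦ if k = 0 then ∅ else univ) next n
  have hc : ∀ n, IsDyadicLevel μ n (c n) := by
    intro n
    induction n with
    | zero =>
      refine ⟨fun k ↦ by by_cases hk : k = 0 <;> simp [c, hk],
        monotone_nat_of_le_succ fun k ↦ by simp [c], fun k ↦ ?_⟩
      rcases Nat.eq_zero_or_pos k with rfl | hk
      · simp [c]
      · simp [c, hk.ne', show (1 : ℝ) ≤ k by exact_mod_cast hk]
    | succ n ih => exact hnext n _ ih
  have hrefines : ∀ n k, c (n + 1) (2 * k) = c n k := fun n ↦ hnext_refines n _ (hc n)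
  refine ⟨c, hc, hrefines, fun n ↦ ?_, by simp [c]⟩
  induction n with
  | zero => simp [c]
  | succ n ih => rw [← ih, ← hrefines n 0]

end Atomless

theorem restrict_Ioc_zero_one_Iic {t : ℝ} (ht : t ∈ Icc (0 : ℝ) 1) :
    volume.restrict (Ioc (0 : ℝ) 1) (Iic t) = ENNReal.ofReal t := by
  rw [Measure.restrict_apply measurableSet_Iic, inter_comm, Ioc_inter_Iic, min_eq_right ht.2,
    Real.volume_Ioc, sub_zero]

theorem restrict_Ioc_zero_one_Ioi_one_sub {t : ℝ} (ht : t ∈ Icc (0 : ℝ) 1) :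
    volume.restrict (Ioc (0 : ℝ) 1) (Ioi (1 - t)) = ENNReal.ofReal t := by
  rw [Measure.restrict_apply measurableSet_Ioi, inter_comm, Ioc_inter_Ioi,
    max_eq_right (by linarith [ht.2]), Real.volume_Ioc, sub_sub_cancel]

section UniformLaw

variable {Ω : Type*} [MeasurableSpace Ω] {μ : Measure Ω}

theorem exists_measurable_sandwich_of_monotone {C : ℝ → Set Ω} (hC : Monotone C)
    (hCm : ∀ t, MeasurableSet (C t)) (hbdd : ∀ ω, BddBelow {t | ω ∈ C t})
    (hne : ∀ ω, ∃ t, ω ∈ C t) :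
    ∃ X : Ω → ℝ, Measurable X ∧ ∀ t, {ω | X ω < t} ⊆ C t ∧ C t ⊆ {ω | X ω ≤ t} := by
  set X : Ω → ℝ := fun ω ↦ sInf {t | ω ∈ C t}
  have hlt : ∀ ω t, X ω < t → ω ∈ C t := fun ω t h ↦ by
    obtain ⟨s, hs, hst⟩ := (csInf_lt_iff (hbdd ω) (hne ω)).1 h
    exact hC hst.le hs
  have hle : ∀ ω t, ω ∈ C t → X ω ≤ t := fun ω t h ↦ csInf_le (hbdd ω) h
  refine ⟨X, measurable_of_Iio fun t ↦ ?_, fun t ↦ ⟨fun ω ↦ hlt ω t, fun ω ↦ hle ω t⟩⟩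
  have : X ⁻¹' Iio t = ⋃ (q : ℚ) (_ : (q : ℝ) < t), C q := by
    ext ω
    simp only [mem_preimage, mem_Iio, mem_iUnion, exists_prop]
    refine ⟨fun h ↦ ?_, fun ⟨q, hqt, hq⟩ ↦ (hle ω q hq).trans_lt hqt⟩
    obtain ⟨q, hXq, hqt⟩ := exists_rat_btwn h
    exact ⟨q, hqt, hlt ω q hXq⟩
  rw [this]
  exact .iUnion fun q ↦ .iUnion fun _ ↦ hCm q

theorem measurePreserving_Ioc_of_sandwich [IsProbabilityMeasure μ] {X : Ω → ℝ}
    (hX : Measurable X) (hX01 : ∀ ω, X ω ∈ Icc 0 1)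
    (h : ∀ u ∈ Ioo (0 : ℝ) 1, ∃ E, {ω | X ω < u} ⊆ E ∧ E ⊆ {ω | X ω ≤ u} ∧ μ E = .ofReal u) :
    MeasurePreserving X μ (volume.restrict (Ioc 0 1)) := by
  have hlt : ∀ u ∈ Ioo (0 : ℝ) 1, μ {ω | X ω < u} ≤ ENNReal.ofReal u := fun u hu ↦ by
    obtain ⟨E, hlt, -, hE⟩ := h u hu
    exact hE ▸ measure_mono hlt
  have hle : ∀ u ∈ Ioo (0 : ℝ) 1, ENNReal.ofReal u ≤ μ {ω | X ω ≤ u} := fun u hu ↦ by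
    obtain ⟨E, -, hle, hE⟩ := h u hu
    exact hE ▸ measure_mono hle
  refine ⟨hX, Measure.ext_of_Iic _ _ fun u ↦ ?_⟩
  rw [Measure.map_apply hX measurableSet_Iic, Measure.restrict_apply measurableSet_Iic,
    inter_comm, Ioc_inter_Iic, Real.volume_Ioc, sub_zero]
  rcases lt_or_ge u 0 with hu0 | hu0
  · have hX_empty : X ⁻¹' Iic u = ∅ :=
      eq_empty_of_forall_notMem fun ω h ↦ (hu0.trans_le (hX01 ω).1).not_ge h
    rw [hX_empty, measure_empty, ENNReal.ofReal_eq_zero.2 (min_le_right _ _ |>.trans hu0.le)]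
  rcases le_or_gt 1 u with hu1 | hu1
  · have hX_univ : X ⁻¹' Iic u = univ := eq_univ_of_forall fun ω ↦ (hX01 ω).2.trans hu1
    rw [hX_univ, measure_univ, min_eq_left hu1, ENNReal.ofReal_one]
  rw [min_eq_right hu1.le]
  refine le_antisymm ?_ ?_
  · have hlim : Tendsto ENNReal.ofReal (𝓝[>] u) (𝓝 (ENNReal.ofReal u)) :=
      (ENNReal.continuous_ofReal.tendsto u).mono_left nhdsWithin_le_nhds
    refine ge_of_tendsto hlim ?_
    filter_upwards [Ioo_mem_nhdsGT hu1] with v hv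
    exact (measure_mono fun ω (h : X ω ≤ u) ↦ h.trans_lt hv.1).trans
      (hlt v ⟨hu0.trans_lt hv.1, hv.2⟩)
  · rcases hu0.eq_or_lt with rfl | hu0
    · simp
    · exact hle u ⟨hu0, hu1⟩

end UniformLaw

theorem Atomless.exists_uniform {Ω : Type*} [MeasurableSpace Ω] {μ : Measure Ω}
    [IsProbabilityMeasure μ] (hμ : Atomless μ) :
    ∃ X : Ω → ℝ, (∀ ω, X ω ∈ Icc 0 1) ∧ MeasurePreserving X μ (volume.restrict (Ioc 0 1)) := by
  obtain ⟨c, hc, hcref, hc0, hc01⟩ := hμ.exists_dyadic_chain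
  set C : ℝ → Set Ω := fun t ↦ ⋃ n, c n ⌊t * 2 ^ n⌋₊
  have hC : Monotone C := fun t t' h ↦ iUnion_mono fun n ↦ (hc n).2.1 (by gcongr)
  have hC0 : C 0 = ∅ := by simp [C, hc0]
  have hC1 : C 1 = univ := eq_univ_of_forall fun ω ↦ mem_iUnion.2 ⟨0, by simp [hc01]⟩
  have hCμ : ∀ t ∈ Icc (0 : ℝ) 1, μ (C t) = ENNReal.ofReal t := by
    rintro t ⟨ht0, ht1⟩
    have hgrow : Monotone fun n ↦ c n ⌊t * 2 ^ n⌋₊ := monotone_nat_of_le_succ fun n ↦ by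
      rw [← hcref]
      refine (hc _).2.1 (Nat.le_floor ?_)
      push_cast
      rw [pow_succ, ← mul_assoc, mul_comm 2]
      gcongr
      exact Nat.floor_le (by positivity)
    have hdyadic : Tendsto (fun n : ℕ ↦ (⌊t * 2 ^ n⌋₊ : ℝ) / 2 ^ n) atTop (𝓝 t) :=
      (tendsto_nat_floor_mul_div_atTop ht0).comp (tendsto_pow_atTop_atTop_of_one_lt one_lt_two)
    have hlim : Tendsto (fun n ↦ μ (c n ⌊t * 2 ^ n⌋₊)) atTop (𝓝 (ENNReal.ofReal t)) := by
      simp_rw [fun n ↦ (hc n).2.2]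
      have := (ENNReal.continuous_ofReal.tendsto _).comp (hdyadic.min (tendsto_const_nhds (x := 1)))
      rwa [min_eq_left ht1] at this
    exact tendsto_nhds_unique (tendsto_measure_iUnion_atTop hgrow) hlim
  obtain ⟨X, hX, hsand⟩ := exists_measurable_sandwich_of_monotone hC
    (fun t ↦ .iUnion fun n ↦ (hc n).1 _)
    (fun ω ↦ ⟨0, fun t ht ↦ not_lt.1 fun h ↦ by simpa [hC0] using hC h.le ht⟩)
    (fun ω ↦ ⟨1, hC1 ▸ mem_univ ω⟩)
  have hX01 : ∀ ω, X ω ∈ Icc 0 1 := fun ω ↦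
    ⟨not_lt.1 fun h ↦ by simpa [hC0] using (hsand 0).1 h, (hsand 1).2 (hC1 ▸ mem_univ ω)⟩
  exact ⟨X, hX01, measurePreserving_Ioc_of_sandwich hX hX01 fun u hu ↦
    ⟨C u, (hsand u).1, (hsand u).2, hCμ u (Ioo_subset_Icc_self hu)⟩⟩

theorem Atomless.cond {Ω : Type*} [MeasurableSpace Ω] {μ : Measure Ω} [IsFiniteMeasure μ]
    (hμ : Atomless μ) {A : Set Ω} (hA : MeasurableSet A) : Atomless μ[|A] := by
  intro s hs hpos
  rw [cond_apply hA] at hpos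
  have hAs : 0 < μ (A ∩ s) := (ENNReal.mul_pos_iff.1 hpos).2
  have hA0 : (μ A)⁻¹ ≠ 0 := ENNReal.inv_ne_zero.2 (measure_ne_top μ A)
  have hAtop : (μ A)⁻¹ ≠ ∞ :=
    ENNReal.inv_ne_top.2 (hAs.trans_le (measure_mono inter_subset_left)).ne'
  obtain ⟨t, hts, ht, ht0, hlt⟩ := hμ (A ∩ s) (hA.inter hs) hAs
  refine ⟨t, hts.trans inter_subset_right, ht, ?_, ?_⟩ <;>
    simp only [cond_apply hA, inter_eq_self_of_subset_right (hts.trans inter_subset_left)]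
  · exact ENNReal.mul_pos hA0 ht0.ne'
  · exact ENNReal.mul_lt_mul_right hA0 hAtop hlt

theorem measurable_dite_mem_of_countable {Ω α β : Type*} [MeasurableSpace Ω]
    [MeasurableSpace α] [MeasurableSingletonClass α] [MeasurableSpace β] {W : Ω → α}
    (hW : Measurable W) {T : Set α} [DecidablePred (· ∈ T)] (hT : T.Countable) {f : T → Ω → β}
    (hf : ∀ w, Measurable (f w)) (b : β) :
    Measurable fun ω ↦ if h : W ω ∈ T then f ⟨W ω, h⟩ ω else b := by
  have : Countable T := hT.to_subtype
  have hf' : Measurable fun p : Ω × T ↦ f p.2 p.1 := measurable_from_prod_countable_left hf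
  let : DecidablePred (· ∈ W ⁻¹' T) := fun ω ↦ ‹DecidablePred (· ∈ T)› (W ω)
  exact Measurable.dite (s := W ⁻¹' T) (f := fun ω ↦ f ⟨W ω, ω.2⟩ ω) (g := fun _ ↦ b)
    (hf'.comp (measurable_subtype_coe.prodMk (hW.comp measurable_subtype_coe).subtype_mk))
    measurable_const (hW hT.measurableSet)

section Fibers

variable {Ω : Type*} [MeasurableSpace Ω] {P : Measure Ω} [IsProbabilityMeasure P] {W : Ω → ℝ}

theorem Atomless.exists_uniform_on_fibers (hP : Atomless P) (hW : Measurable W) :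
    ∃ θ : Ω → ℝ, Measurable θ ∧ (∀ ω, θ ω ∈ Icc 0 1) ∧ ∀ w, ∀ t ∈ Icc (0 : ℝ) 1,
      P (W ⁻¹' {w} ∩ {ω | θ ω ≤ t}) = ENNReal.ofReal t * P (W ⁻¹' {w}) := by
  set T := {w | 0 < P (W ⁻¹' {w})}
  have hT : T.Countable := Measure.countable_meas_pos_of_disjoint_of_meas_iUnion_ne_top P
    (fun w ↦ hW (measurableSet_singleton w))
    (fun w w' hww' ↦ disjoint_singleton.2 hww' |>.preimage W) (measure_ne_top P _)
  have hfiber : ∀ w : T, ∃ X : Ω → ℝ, (∀ ω, X ω ∈ Icc 0 1) ∧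
      MeasurePreserving X P[|W ⁻¹' {(w : ℝ)}] (volume.restrict (Ioc 0 1)) := fun w ↦
    have := cond_isProbabilityMeasure (μ := P) w.2.ne'
    (hP.cond (hW (measurableSet_singleton _))).exists_uniform
  choose θf hθf01 hθf using hfiber
  set θ : Ω → ℝ := fun ω ↦ if h : W ω ∈ T then θf ⟨W ω, h⟩ ω else 0
  have hθ : Measurable θ := measurable_dite_mem_of_countable hW hT (fun w ↦ (hθf w).measurable) 0
  refine ⟨θ, hθ, fun ω ↦ ?_, fun w t ht ↦ ?_⟩
  · simp only [θ]
    split_ifs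
    exacts [hθf01 _ ω, ⟨le_rfl, zero_le_one⟩]
  by_cases hw : w ∈ T
  · have hfib : W ⁻¹' {w} ∩ {ω | θ ω ≤ t} = W ⁻¹' {w} ∩ θf ⟨w, hw⟩ ⁻¹' Iic t := by
      ext ω
      simp only [mem_inter_iff, mem_preimage, mem_singleton_iff, mem_ofPred_eq, mem_Iic]
      refine and_congr_right fun hω ↦ ?_
      subst hω
      simp [θ, hw]
    rw [hfib, ← cond_mul_eq_inter (hW (measurableSet_singleton w)),
      (hθf ⟨w, hw⟩).measure_preimage measurableSet_Iic.nullMeasurableSet,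
      restrict_Ioc_zero_one_Iic ht]
  · have hw0 : P (W ⁻¹' {w}) = 0 := nonpos_iff_eq_zero.1 (not_lt.1 hw)
    rw [hw0, mul_zero]
    exact measure_mono_null inter_subset_left hw0

end Fibers

-- Meaningful only for `u ∈ (0, 1)`; elsewhere the set may be empty or unbounded below.
noncomputable def quantile (F : ℝ → ℝ) (u : ℝ) : ℝ := sInf {x | u ≤ F x}

theorem quantile_le_iff {F : ℝ → ℝ} (hmono : Monotone F)
    (hrc : ∀ x, ContinuousWithinAt F (Ioi x) x) (hbot : Tendsto F atBot (𝓝 0))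
    (htop : Tendsto F atTop (𝓝 1)) {u : ℝ} (hu : u ∈ Ioo (0 : ℝ) 1) {x : ℝ} :
    quantile F u ≤ x ↔ u ≤ F x := by
  have hne : {x | u ≤ F x}.Nonempty := (htop.eventually (eventually_ge_nhds hu.2)).exists
  obtain ⟨x₀, hx₀⟩ := (hbot.eventually (eventually_lt_nhds hu.1)).exists
  have hbdd : BddBelow {x | u ≤ F x} :=
    ⟨x₀, fun y hy ↦ (hmono.reflect_lt (hx₀.trans_le hy)).le⟩
  refine ⟨fun h ↦ ge_of_tendsto (hrc x) ?_, fun h ↦ csInf_le hbdd h⟩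
  filter_upwards [self_mem_nhdsWithin] with y (hy : x < y)
  obtain ⟨z, hz, hzy⟩ := (csInf_lt_iff hbdd hne).1 (h.trans_lt hy)
  exact hz.trans (hmono hzy.le)

theorem exists_leftLim_cdf_le_le_cdf (μ : Measure ℝ) {u : ℝ} (hu : u ∈ Ioo (0 : ℝ) 1) :
    ∃ w, leftLim (cdf μ) w ≤ u ∧ u ≤ cdf μ w := by
  have hgal : ∀ x, quantile (cdf μ) u ≤ x ↔ u ≤ cdf μ x := fun x ↦ quantile_le_iff
    (monotone_cdf μ) (fun x ↦ ((cdf μ).right_continuous x).mono Ioi_subset_Ici_self)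
    (tendsto_cdf_atBot μ) (tendsto_cdf_atTop μ) hu
  refine ⟨quantile (cdf μ) u, ?_, (hgal _).1 le_rfl⟩
  rw [(monotone_cdf μ).leftLim_eq_sSup]
  exact csSup_le (nonempty_Iio.image _) (forall_mem_image.2 fun z hz ↦
    (not_le.1 fun h ↦ not_le.2 hz ((hgal z).2 h)).le)

section DistribTransform

variable {Ω : Type*} [MeasurableSpace Ω] {P : Measure Ω} {W θ : Ω → ℝ}

/-- Rüschendorf's distributional transform of `W`, randomised by `θ` on the atoms of its law. -/
noncomputable def distribTransform (P : Measure Ω) (W θ : Ω → ℝ) (ω : Ω) : ℝ :=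
  leftLim (cdf (P.map W)) (W ω) +
    θ ω * (cdf (P.map W) (W ω) - leftLim (cdf (P.map W)) (W ω))

theorem leftLim_cdf_nonneg (μ : Measure ℝ) (x : ℝ) : 0 ≤ leftLim (cdf μ) x :=
  (cdf_nonneg μ (x - 1)).trans ((monotone_cdf μ).le_leftLim (sub_one_lt x))

theorem leftLim_cdf_le_distribTransform (hθ : ∀ ω, θ ω ∈ Icc 0 1) (ω : Ω) :
    leftLim (cdf (P.map W)) (W ω) ≤ distribTransform P W θ ω :=
  le_add_of_nonneg_right <| mul_nonneg (hθ ω).1 <|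
    sub_nonneg.2 <| (monotone_cdf _).leftLim_le le_rfl

theorem distribTransform_nonneg (hθ : ∀ ω, θ ω ∈ Icc 0 1) (ω : Ω) :
    0 ≤ distribTransform P W θ ω :=
  (leftLim_cdf_nonneg _ _).trans (leftLim_cdf_le_distribTransform hθ ω)

theorem distribTransform_le_cdf (hθ : ∀ ω, θ ω ∈ Icc 0 1) (ω : Ω) :
    distribTransform P W θ ω ≤ cdf (P.map W) (W ω) := by
  have hjump := sub_nonneg.2 <| (monotone_cdf (P.map W)).leftLim_le (le_refl (W ω))
  have := mul_le_of_le_one_left hjump (hθ ω).2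
  unfold distribTransform
  linarith

theorem cdf_le_distribTransform (hθ : ∀ ω, θ ω ∈ Icc 0 1) {ω : Ω} {z : ℝ} (hz : z < W ω) :
    cdf (P.map W) z ≤ distribTransform P W θ ω :=
  ((monotone_cdf _).le_leftLim hz).trans (leftLim_cdf_le_distribTransform hθ ω)

theorem measure_preimage_Iio_eq_leftLim_cdf [IsProbabilityMeasure P] (hW : Measurable W) (w : ℝ) :
    P (W ⁻¹' Iio w) = ENNReal.ofReal (leftLim (cdf (P.map W)) w) := by
  have : IsProbabilityMeasure (P.map W) := Measure.isProbabilityMeasure_map hW.aemeasurable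
  rw [← Measure.map_apply hW measurableSet_Iio, ← measure_cdf (P.map W),
    StieltjesFunction.measure_Iio _ (tendsto_cdf_atBot _), sub_zero, measure_cdf]

theorem measure_preimage_singleton_eq_cdf_sub [IsProbabilityMeasure P] (hW : Measurable W)
    (w : ℝ) :
    P (W ⁻¹' {w}) = ENNReal.ofReal (cdf (P.map W) w - leftLim (cdf (P.map W)) w) := by
  have : IsProbabilityMeasure (P.map W) := Measure.isProbabilityMeasure_map hW.aemeasurable
  rw [← Measure.map_apply hW (measurableSet_singleton w), ← measure_cdf (P.map W),
    StieltjesFunction.measure_singleton, measure_cdf]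

theorem exists_sandwich_distribTransform [IsProbabilityMeasure P] (hW : Measurable W)
    (hθm : Measurable θ) (hθ : ∀ ω, θ ω ∈ Icc 0 1) (hfiber : ∀ w, ∀ t ∈ Icc (0 : ℝ) 1,
      P (W ⁻¹' {w} ∩ {ω | θ ω ≤ t}) = ENNReal.ofReal t * P (W ⁻¹' {w}))
    {u : ℝ} (hu : u ∈ Ioo (0 : ℝ) 1) :
    ∃ E, {ω | distribTransform P W θ ω < u} ⊆ E ∧ E ⊆ {ω | distribTransform P W θ ω ≤ u} ∧
      P E = ENNReal.ofReal u := by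
  set F := cdf (P.map W)
  obtain ⟨w, hau, huF⟩ := exists_leftLim_cdf_le_le_cdf (P.map W) hu
  set a := leftLim F w
  set t := (u - a) / (F w - a)
  have ht : t ∈ Icc 0 1 :=
    ⟨div_nonneg (sub_nonneg.2 hau) (by linarith), div_le_one_of_le₀ (by linarith) (by linarith)⟩
  have hat : a + t * (F w - a) = u := by
    rcases eq_or_lt_of_le (show a ≤ F w by linarith) with h | h
    · rw [← h, sub_self, mul_zero, add_zero]; linarith
    · rw [div_mul_cancel₀ _ (sub_pos.2 h).ne']; ring
  -- `w` is a `u`-quantile of `W`; to `{W < w}` add the fraction `t` of the atom at `w`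
  refine ⟨W ⁻¹' Iio w ∪ (W ⁻¹' {w} ∩ {ω | θ ω ≤ t}), fun ω hω ↦ ?_, fun ω hω ↦ ?_, ?_⟩
  · rcases lt_trichotomy (W ω) w with h | h | h
    · exact .inl h
    · refine .inr ⟨h, ?_⟩
      have hω : a + θ ω * (F w - a) < a + t * (F w - a) := by
        rw [hat]; simpa [distribTransform, h] using hω
      exact (lt_of_mul_lt_mul_right (lt_of_add_lt_add_left hω) (by linarith)).le
    · exact absurd hω (not_lt.2 <| huF.trans <| ((monotone_cdf _).le_leftLim h).trans
        (leftLim_cdf_le_distribTransform hθ ω))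
  · rcases hω with h | ⟨h, hθt⟩
    · exact (distribTransform_le_cdf hθ ω).trans <| ((monotone_cdf _).le_leftLim h).trans hau
    · change distribTransform P W θ ω ≤ u
      rw [distribTransform, show W ω = w from h, ← hat]
      exact add_le_add_right (mul_le_mul_of_nonneg_right (show θ ω ≤ t from hθt) (by linarith)) _
  · rw [measure_union ((disjoint_singleton_right.2 self_notMem_Iio).preimage W |>.mono_right
        inter_subset_left)
      ((hW (measurableSet_singleton w)).inter (measurableSet_le hθm measurable_const)),
      measure_preimage_Iio_eq_leftLim_cdf hW, hfiber w t ht,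
      measure_preimage_singleton_eq_cdf_sub hW, ← ENNReal.ofReal_mul ht.1,
      ← ENNReal.ofReal_add (leftLim_cdf_nonneg _ w) (mul_nonneg ht.1 (by linarith)), hat]

theorem measurePreserving_distribTransform [IsProbabilityMeasure P] (hW : Measurable W)
    (hθm : Measurable θ) (hθ : ∀ ω, θ ω ∈ Icc 0 1) (hfiber : ∀ w, ∀ t ∈ Icc (0 : ℝ) 1,
      P (W ⁻¹' {w} ∩ {ω | θ ω ≤ t}) = ENNReal.ofReal t * P (W ⁻¹' {w})) :
    MeasurePreserving (distribTransform P W θ) P (volume.restrict (Ioc 0 1)) := by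
  have hF : Measurable (cdf (P.map W)) := (monotone_cdf _).measurable
  have hL : Measurable (leftLim (cdf (P.map W))) := (monotone_cdf _).leftLim.measurable
  refine measurePreserving_Ioc_of_sandwich
    ((hL.comp hW).add (hθm.mul ((hF.comp hW).sub (hL.comp hW))))
    (fun ω ↦ ⟨distribTransform_nonneg hθ ω, (distribTransform_le_cdf hθ ω).trans (cdf_le_one _ _)⟩)
    fun u hu ↦ exists_sandwich_distribTransform hW hθm hθ hfiber hu

end DistribTransform

theorem measurePreserving_toIocMod_add (s : ℝ) :
    MeasurePreserving (fun x ↦ toIocMod one_pos 0 (x + s)) (volume.restrict (Ioc 0 1))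
      (volume.restrict (Ioc 0 1)) := by
  -- the rotation by `s` of `AddCircle 1`, read off in `(0, 1]`
  have h := (measurePreserving_subtype_coe measurableSet_Ioc).comp
    ((AddCircle.measurePreserving_equivIoc 1 (a := 0)).comp
      ((measurePreserving_add_right volume (s : AddCircle (1 : ℝ))).comp
        (AddCircle.measurePreserving_mk 1 0)))
  simp only [zero_add] at h
  exact h

theorem le_toIocMod_zero_one {y : ℝ} (hy : y ∈ Icc (0 : ℝ) 1) : y ≤ toIocMod one_pos 0 y := by
  rcases hy.1.eq_or_lt with rfl | h
  · rw [toIocMod_apply_left]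
    norm_num
  · rw [(toIocMod_eq_self one_pos).2 ⟨h, by simpa using hy.2⟩]

section Coupling

variable {Ω : Type*} [MeasurableSpace Ω] {P : Measure Ω}

theorem exists_cdf_eq_of_uniform {R : Ω → ℝ}
    (hR : MeasurePreserving R P (volume.restrict (Ioc 0 1))) {F : ℝ → ℝ} (hmono : Monotone F)
    (hrc : ∀ x, ContinuousWithinAt F (Ioi x) x) (hbot : Tendsto F atBot (𝓝 0))
    (htop : Tendsto F atTop (𝓝 1)) :
    ∃ V : Ω → ℝ, Measurable V ∧ (∀ z, P.real {ω | V ω ≤ z} = F z) ∧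
      ∀ᵐ ω ∂P, ∀ z, V ω ≤ z ↔ R ω ≤ F z := by
  -- Moving `R` into `(0, 1)`, where `quantile F` is meaningful, only changes it on a null set.
  set Y : Ω → ℝ := fun ω ↦ if R ω ∈ Ioo 0 1 then R ω else 2⁻¹
  have hY01 : ∀ ω, Y ω ∈ Ioo 0 1 := fun ω ↦ by
    simp only [Y]
    split_ifs with h
    exacts [h, by norm_num]
  have hgal : ∀ ω z, quantile F (Y ω) ≤ z ↔ Y ω ≤ F z := fun ω z ↦
    quantile_le_iff hmono hrc hbot htop (hY01 ω)
  have hYR : Y =ᵐ[P] R := by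
    have : ∀ᵐ x ∂volume.restrict (Ioc (0 : ℝ) 1), x ∈ Ioo 0 1 := by
      rw [Measure.restrict_congr_set Ioo_ae_eq_Ioc.symm]
      exact ae_restrict_mem measurableSet_Ioo
    filter_upwards [hR.quasiMeasurePreserving.ae this] with ω hω
    exact if_pos hω
  have hY : MeasurePreserving Y P (volume.restrict (Ioc 0 1)) :=
    ⟨.ite (hR.measurable measurableSet_Ioo) hR.measurable measurable_const,
      (Measure.map_congr hYR).trans hR.map_eq⟩
  have hpre : ∀ z, {ω | quantile F (Y ω) ≤ z} = Y ⁻¹' Iic (F z) := fun z ↦ by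
    ext ω
    exact hgal ω z
  refine ⟨fun ω ↦ quantile F (Y ω), measurable_of_Iic fun z ↦ ?_, fun z ↦ ?_, ?_⟩
  · change MeasurableSet {ω | quantile F (Y ω) ≤ z}
    rw [hpre]
    exact hY.measurable measurableSet_Iic
  · rw [hpre, measureReal_def, hY.measure_preimage measurableSet_Iic.nullMeasurableSet,
      restrict_Ioc_zero_one_Iic ⟨hmono.le_of_tendsto hbot z, hmono.ge_of_tendsto htop z⟩,
      ENNReal.toReal_ofReal (hmono.le_of_tendsto hbot z)]
  · filter_upwards [hYR] with ω hω z
    rw [← hω]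
    exact hgal ω z

theorem measureReal_sub_le_measureReal_lt [IsFiniteMeasure P] (V W : Ω → ℝ) (z : ℝ) :
    P.real {ω | V ω ≤ z} - P.real {ω | W ω ≤ z} ≤ P.real {ω | V ω < W ω} := by
  have : {ω | V ω ≤ z} ⊆ {ω | V ω < W ω} ∪ {ω | W ω ≤ z} := fun ω (h : V ω ≤ z) ↦
    (lt_or_ge (V ω) (W ω)).imp id fun h' ↦ h'.trans h
  linarith [measureReal_mono (μ := P) this,
    measureReal_union_le (μ := P) {ω | V ω < W ω} {ω | W ω ≤ z}]

theorem bddAbove_sub_cdf_and_iSup_mem_Icc (μ : Measure ℝ) [IsProbabilityMeasure μ] {F : ℝ → ℝ}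
    (hmono : Monotone F) (htop : Tendsto F atTop (𝓝 1)) :
    BddAbove (range fun z ↦ F z - cdf μ z) ∧ ⨆ z, (F z - cdf μ z) ∈ Icc 0 1 := by
  have hle : ∀ z, F z - cdf μ z ≤ 1 := fun z ↦ by
    linarith [hmono.ge_of_tendsto htop z, cdf_nonneg μ z]
  have hbdd : BddAbove (range fun z ↦ F z - cdf μ z) := ⟨1, by rintro _ ⟨z, rfl⟩; exact hle z⟩
  have hlim : Tendsto (fun z ↦ F z - cdf μ z) atTop (𝓝 0) := by
    simpa using htop.sub (tendsto_cdf_atTop μ)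
  exact ⟨hbdd, le_of_tendsto hlim (.of_forall fun z ↦ le_ciSup hbdd z), ciSup_le hle⟩

theorem Atomless.exists_measureReal_lt_le_iSup [IsProbabilityMeasure P] (hP : Atomless P)
    {W : Ω → ℝ} (hW : Measurable W) {F : ℝ → ℝ} (hmono : Monotone F)
    (hrc : ∀ x, ContinuousWithinAt F (Ioi x) x) (hbot : Tendsto F atBot (𝓝 0))
    (htop : Tendsto F atTop (𝓝 1)) :
    ∃ V : Ω → ℝ, Measurable V ∧ (∀ z, P.real {ω | V ω ≤ z} = F z) ∧
      P.real {ω | V ω < W ω} ≤ ⨆ z, (F z - cdf (P.map W) z) := by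
  have : IsProbabilityMeasure (P.map W) := Measure.isProbabilityMeasure_map hW.aemeasurable
  set G := cdf (P.map W)
  set S := ⨆ z, (F z - G z)
  obtain ⟨hbdd, hS⟩ := bddAbove_sub_cdf_and_iSup_mem_Icc (P.map W) hmono htop
  obtain ⟨θ, hθm, hθ, hfiber⟩ := hP.exists_uniform_on_fibers hW
  set U := distribTransform P W θ
  have hU := measurePreserving_distribTransform hW hθm hθ hfiber
  set R := fun ω ↦ toIocMod one_pos 0 (U ω + S)
  obtain ⟨V, hV, hVF, hVR⟩ := exists_cdf_eq_of_uniform (R := R)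
    ((measurePreserving_toIocMod_add S).comp hU) hmono hrc hbot htop
  refine ⟨V, hV, hVF, ?_⟩
  set Bad := {ω | ¬ ∀ z, V ω ≤ z ↔ R ω ≤ F z}
  have hsub : {ω | V ω < W ω} ⊆ U ⁻¹' Ioi (1 - S) ∪ Bad ∪ ⋃ q : ℚ, U ⁻¹' {G q} := by
    intro ω (hω : V ω < W ω)
    refine (lt_or_ge (1 - S) (U ω)).elim (fun h ↦ .inl (.inl h)) fun hU1 ↦ ?_
    by_cases hgal : ∀ z, V ω ≤ z ↔ R ω ≤ F z
    swap
    · exact .inl (.inr hgal)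
    obtain ⟨q, hVq, hqW⟩ := exists_rat_btwn hω
    have hU0 : 0 ≤ U ω := distribTransform_nonneg hθ ω
    have hUR : U ω + S ≤ R ω := le_toIocMod_zero_one ⟨by linarith [hS.1], by linarith⟩
    have hRF : R ω ≤ F q := (hgal q).1 hVq.le
    have hFG : F q - G q ≤ S := le_ciSup hbdd q
    exact .inr (mem_iUnion.2 ⟨q, le_antisymm (by linarith) (cdf_le_distribTransform hθ hqW)⟩)
  have htail : P (U ⁻¹' Ioi (1 - S)) = ENNReal.ofReal S :=
    (hU.measure_preimage measurableSet_Ioi.nullMeasurableSet).trans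
      (restrict_Ioc_zero_one_Ioi_one_sub hS)
  have hatoms : ∀ q : ℚ, P (U ⁻¹' {G q}) = 0 := fun q ↦
    (hU.measure_preimage (measurableSet_singleton _).nullMeasurableSet).trans (measure_singleton _)
  refine ENNReal.toReal_le_of_le_ofReal hS.1 ?_
  calc P {ω | V ω < W ω} ≤ P (U ⁻¹' Ioi (1 - S) ∪ Bad ∪ ⋃ q : ℚ, U ⁻¹' {G q}) := measure_mono hsub
    _ ≤ P (U ⁻¹' Ioi (1 - S)) + P Bad + P (⋃ q : ℚ, U ⁻¹' {G q}) :=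
      (measure_union_le _ _).trans (add_le_add_left (measure_union_le _ _) _)
    _ = ENNReal.ofReal S := by
      rw [htail, ae_iff.1 hVR, measure_iUnion_null hatoms, add_zero, add_zero]

end Coupling

theorem inf_prob_gt_eq_general {Ω : Type*} [MeasurableSpace Ω]
    (P : Measure Ω) [IsProbabilityMeasure P] (hatomless : Atomless P)
    (W : Ω → ℝ) (hW : Measurable W)
    (FW : ℝ → ℝ) (hFW : FW = fun z => (P {ω | W ω ≤ z}).toReal)
    (FV : ℝ → ℝ) (hFVmono : Monotone FV)
    (hFVrc : ∀ x : ℝ, Tendsto FV (𝓝[>] x) (𝓝 (FV x)))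
    (hFVbot : Tendsto FV atBot (𝓝 0)) (hFVtop : Tendsto FV atTop (𝓝 1)) :
    sInf {p : ℝ | ∃ V : Ω → ℝ, Measurable V ∧ (∀ z : ℝ, (P {ω | V ω ≤ z}).toReal = FV z) ∧
        p = (P {ω | V ω < W ω}).toReal}
      = ⨆ z : ℝ, (FV z - FW z) := by
  have : IsProbabilityMeasure (P.map W) := Measure.isProbabilityMeasure_map hW.aemeasurable
  have hFW_real : ∀ z, FW z = P.real {ω | W ω ≤ z} := fun z ↦ by rw [hFW]; rfl
  have hlower : ∀ V : Ω → ℝ, (∀ z, P.real {ω | V ω ≤ z} = FV z) →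
      ⨆ z, (FV z - FW z) ≤ P.real {ω | V ω < W ω} := fun V hV ↦
    ciSup_le fun z ↦ by
      rw [← hV z, hFW_real]
      exact measureReal_sub_le_measureReal_lt V W z
  have hFW_cdf : FW = cdf (P.map W) := funext fun z ↦ by
    rw [hFW_real, cdf_eq_real, map_measureReal_apply hW measurableSet_Iic]
    rfl
  obtain ⟨V, hV, hVF, hVW⟩ :=
    hatomless.exists_measureReal_lt_le_iSup hW hFVmono hFVrc hFVbot hFVtop
  rw [← hFW_cdf] at hVW
  refine IsLeast.csInf_eq ⟨⟨V, hV, hVF, (le_antisymm hVW (hlower V hVF)).symm⟩, ?_⟩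
  rintro p ⟨V', -, hV', rfl⟩
  exact hlower V' hV'

/-- On an atomless probability space, for a random variable `W` with cdf `F_W`
and a cdf `F_V` on `ℝ` with at least one of them continuous,
`inf { ℙ(W > V) : V ~ F_V } = sup_{z∈ℝ} (F_V(z) − F_W(z))`. -/
theorem inf_prob_gt_eq {Ω : Type*} [MeasurableSpace Ω]
    (P : Measure Ω) [IsProbabilityMeasure P] (hatomless : Atomless P)
    (W : Ω → ℝ) (hW : Measurable W)
    (FW : ℝ → ℝ) (hFW : FW = fun z => (P {ω | W ω ≤ z}).toReal)
    (FV : ℝ → ℝ) (hFVmono : Monotone FV)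
    (hFVrc : ∀ x : ℝ, Tendsto FV (𝓝[>] x) (𝓝 (FV x)))
    (hFVbot : Tendsto FV atBot (𝓝 0)) (hFVtop : Tendsto FV atTop (𝓝 1))
    (hcont : Continuous FW ∨ Continuous FV) :
    sInf {p : ℝ | ∃ V : Ω → ℝ, Measurable V ∧ (∀ z : ℝ, (P {ω | V ω ≤ z}).toReal = FV z) ∧
        p = (P {ω | V ω < W ω}).toReal}
      = ⨆ z : ℝ, (FV z - FW z) :=
  inf_prob_gt_eq_general P hatomless W hW FW hFW FV hFVmono hFVrc hFVbot hFVtop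
end

section
/- Let X be a nonnegative random variable, g a distortion function, η ≥ 0, and 0 ≤ π₀ ≤ E^g[R_η(X)], where R_t(x) = min{x, t}. Then there exists t* ∈ [0, η] such that E^g[R_{t*}(X)] = π₀ and ℙ(R_{t*}(X) ≤ η) = 1. Consequently, R_{t*} is an optimal solution of the problem of maximizing ℙ(R(X) ≤ η) over all R ∈ 𝓡 subject to E^g[R(X)] = π₀, and the optimal value is 1. -/
open MeasureTheory

/-- A distortion function: increasing `g : [0,1] → [0,1]` with `g 0 = 0` and `g 1 = 1`. -/
def IsDistortion (g : ℝ → ℝ) : Prop :=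
  MonotoneOn g (Set.Icc 0 1) ∧ (∀ x ∈ Set.Icc (0:ℝ) 1, g x ∈ Set.Icc (0:ℝ) 1) ∧
    g 0 = 0 ∧ g 1 = 1

/-- The cdf of a real random variable `Z` under `P`. -/
noncomputable def cdfOf {Ω : Type*} [MeasurableSpace Ω] (P : Measure Ω) (Z : Ω → ℝ) :
    ℝ → ℝ := fun z => (P {ω | Z ω ≤ z}).toReal

/-- Distorted expectation `E^g[Z] = ∫_0^∞ g(1 − F_Z(z)) dz` of a nonnegative random
variable `Z`. -/
noncomputable def distExp {Ω : Type*} [MeasurableSpace Ω] (g : ℝ → ℝ) (P : Measure Ω)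
    (Z : Ω → ℝ) : ℝ := ∫ z in Set.Ioi (0 : ℝ), g (1 - cdfOf P Z z)

/-- A retained loss function: `R(0) = 0`, with both `R` and `x ↦ x − R(x)` increasing on
`[0,∞)`. -/
def IsRetention (R : ℝ → ℝ) : Prop :=
  R 0 = 0 ∧ MonotoneOn R (Set.Ici 0) ∧ MonotoneOn (fun x => x - R x) (Set.Ici 0)

/-! Truncating at `t` cuts the survival function off at `t`, so for a distortion `g` with
`g 0 = 0` the premium `t ↦ E^g[min(X, t)] = ∫₀ᵗ g(1 − F_X)` is a primitive of a bounded
monotone function, hence continuous, and vanishes at `t = 0`. The intermediate value theorem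
gives `t* ∈ [0, η]` with premium `π₀`; since `min(X, t*) ≤ t* ≤ η` everywhere, the constraint
`R(X) ≤ η` holds with probability one, which no retention can beat. -/

open Set

section Truncation

variable {Ω : Type*} [MeasurableSpace Ω] (P : Measure Ω) (X : Ω → ℝ) {g : ℝ → ℝ}

lemma monotone_cdfOf [IsFiniteMeasure P] : Monotone (cdfOf P X) := fun _ _ hab =>
  ENNReal.toReal_mono (measure_ne_top P _) (measure_mono fun _ hω => le_trans hω hab)

lemma one_sub_cdfOf_mem_Icc [IsProbabilityMeasure P] (z : ℝ) :
    1 - cdfOf P X z ∈ Icc (0 : ℝ) 1 :=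
  ⟨sub_nonneg.2 measureReal_le_one, sub_le_self _ ENNReal.toReal_nonneg⟩

lemma antitone_distortion_comp_one_sub_cdfOf [IsProbabilityMeasure P]
    (hg : MonotoneOn g (Icc 0 1)) : Antitone fun z => g (1 - cdfOf P X z) := fun _ _ hab =>
  hg (one_sub_cdfOf_mem_Icc P X _) (one_sub_cdfOf_mem_Icc P X _)
    (sub_le_sub_left (monotone_cdfOf P X hab) 1)

lemma cdfOf_min_of_lt {t z : ℝ} (hzt : z < t) :
    cdfOf P (fun ω => min (X ω) t) z = cdfOf P X z := by
  have hset : {ω | min (X ω) t ≤ z} = {ω | X ω ≤ z} := by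
    ext ω
    simp only [mem_ofPred_eq, min_le_iff, or_iff_left_iff_imp]
    exact fun h => absurd h (not_le.2 hzt)
  simp only [cdfOf, hset]

lemma cdfOf_min_of_le [IsProbabilityMeasure P] {t z : ℝ} (htz : t ≤ z) :
    cdfOf P (fun ω => min (X ω) t) z = 1 := by
  have hset : {ω | min (X ω) t ≤ z} = univ :=
    eq_univ_of_forall fun _ => (min_le_right _ _).trans htz
  simp only [cdfOf, hset, measure_univ, ENNReal.toReal_one]

lemma distExp_min_eq_intervalIntegral [IsProbabilityMeasure P] (hg0 : g 0 = 0) {t : ℝ}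
    (ht : 0 ≤ t) :
    distExp g P (fun ω => min (X ω) t) = ∫ z in (0 : ℝ)..t, g (1 - cdfOf P X z) := by
  have hcut : EqOn (fun z => g (1 - cdfOf P (fun ω => min (X ω) t) z))
      ((Ioo 0 t).indicator fun z => g (1 - cdfOf P X z)) (Ioi 0) := by
    intro z hz
    rcases lt_or_ge z t with hzt | htz
    · rw [indicator_of_mem (show z ∈ Ioo 0 t from ⟨hz, hzt⟩)]
      exact congrArg (fun c => g (1 - c)) (cdfOf_min_of_lt P X hzt)
    · rw [indicator_of_notMem fun hm => (not_lt.2 htz) hm.2]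
      show g (1 - _) = 0
      rw [cdfOf_min_of_le P X htz, sub_self, hg0]
  rw [distExp, setIntegral_congr_fun measurableSet_Ioi hcut,
    setIntegral_indicator measurableSet_Ioo, inter_eq_self_of_subset_right Ioo_subset_Ioi_self,
    intervalIntegral.integral_of_le ht, integral_Ioc_eq_integral_Ioo]

lemma exists_distExp_min_eq [IsProbabilityMeasure P] (hg : MonotoneOn g (Icc 0 1))
    (hg0 : g 0 = 0) {η π₀ : ℝ} (hη : 0 ≤ η) (hπ₀nn : 0 ≤ π₀)
    (hπ₀le : π₀ ≤ distExp g P (fun ω => min (X ω) η)) :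
    ∃ t ∈ Icc 0 η, distExp g P (fun ω => min (X ω) t) = π₀ := by
  set premium : ℝ → ℝ := fun t => ∫ z in (0 : ℝ)..t, g (1 - cdfOf P X z)
  have hcont : Continuous premium := intervalIntegral.continuous_primitive
    (fun _ _ => (antitone_distortion_comp_one_sub_cdfOf P X hg).intervalIntegrable) 0
  have hπ₀ : π₀ ∈ Icc (premium 0) (premium η) := by
    rw [distExp_min_eq_intervalIntegral P X hg0 hη] at hπ₀le
    exact ⟨by simpa only [premium, intervalIntegral.integral_same] using hπ₀nn, hπ₀le⟩
  obtain ⟨t, ht, hpremium⟩ := intermediate_value_Icc hη hcont.continuousOn hπ₀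
  exact ⟨t, ht, (distExp_min_eq_intervalIntegral P X hg0 ht.1).trans hpremium⟩

end Truncation

theorem stop_loss_optimal_small_premium_general {Ω : Type*} [MeasurableSpace Ω]
    (P : Measure Ω) [IsProbabilityMeasure P]
    (X : Ω → ℝ)
    (g : ℝ → ℝ) (hg : IsDistortion g)
    (η : ℝ) (hη : 0 ≤ η)
    (π₀ : ℝ) (hπ₀nn : 0 ≤ π₀)
    (hπ₀le : π₀ ≤ distExp g P (fun ω => min (X ω) η)) :
    ∃ ts ∈ Set.Icc (0 : ℝ) η,
      distExp g P (fun ω => min (X ω) ts) = π₀ ∧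
      P {ω | min (X ω) ts ≤ η} = 1 ∧
      ∀ R : ℝ → ℝ, IsRetention R → distExp g P (fun ω => R (X ω)) = π₀ →
        (P {ω | R (X ω) ≤ η}).toReal ≤ (P {ω | min (X ω) ts ≤ η}).toReal := by
  obtain ⟨ts, hts, hpremium⟩ :=
    exists_distExp_min_eq P X hg.1 hg.2.2.1 hη hπ₀nn hπ₀le
  have hsure : {ω | min (X ω) ts ≤ η} = univ :=
    eq_univ_of_forall fun _ => (min_le_right _ _).trans hts.2
  refine ⟨ts, hts, hpremium, by rw [hsure, measure_univ], fun R _ _ => ?_⟩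
  rw [hsure, measure_univ, ENNReal.toReal_one]
  exact measureReal_le_one

/-- **Proposition 3.1.** If `0 ≤ π₀ ≤ E^g[R_η(X)]` with `R_t(x) = min{x,t}`,
then there is `t* ∈ [0,η]` with `E^g[R_{t*}(X)] = π₀` and `ℙ(R_{t*}(X) ≤ η) = 1`; hence
`R_{t*}` is optimal for maximizing `ℙ(R(X) ≤ η)` over `R ∈ 𝓡` with `E^g[R(X)] = π₀`, and the
optimal value is `1`. -/
theorem stop_loss_optimal_small_premium {Ω : Type*} [MeasurableSpace Ω]
    (P : Measure Ω) [IsProbabilityMeasure P]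
    (X : Ω → ℝ) (hX : Measurable X) (hXnn : ∀ ω, 0 ≤ X ω)
    (g : ℝ → ℝ) (hg : IsDistortion g)
    (η : ℝ) (hη : 0 ≤ η)
    (π₀ : ℝ) (hπ₀nn : 0 ≤ π₀)
    (hπ₀le : π₀ ≤ distExp g P (fun ω => min (X ω) η)) :
    ∃ ts ∈ Set.Icc (0 : ℝ) η,
      distExp g P (fun ω => min (X ω) ts) = π₀ ∧
      P {ω | min (X ω) ts ≤ η} = 1 ∧
      ∀ R : ℝ → ℝ, IsRetention R → distExp g P (fun ω => R (X ω)) = π₀ →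
        (P {ω | R (X ω) ≤ η}).toReal ≤ (P {ω | min (X ω) ts ≤ η}).toReal :=
  stop_loss_optimal_small_premium_general P X g hg η hη π₀ hπ₀nn hπ₀le
end
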